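/- Let (φ_M)_M be the sequence of solutions to the truncated mean-field equations i∂_t φ_M = A φ_M + F_M(φ_M) with common initial datum φ₀ ∈ D(𝒩²), ‖φ₀‖_{ℓ²} = 1, and let φ be its (strong) limit as M → ∞. Then φ satisfies the Duhamel form of the mean-field equation: φ(t) = e^{−itA} φ₀ − i ∫₀ᵗ e^{−i(t−s)A} F(φ(s)) ds, where F(φ) := −J(α_φ a* + conj(α_φ) a − |α_φ|²)φ with α_φ := ⟨φ, aφ⟩. -/

import Mathlib

namespace BoseHubbard

noncomputable section

open scoped BigOperators ComplexConjugate
open Complex Filter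

/-! ## The one-lattice-site Hilbert space ℓ²(ℂ), modeled by coefficient sequences -/

/-- A vector of `ℓ²(ℂ)`, given by its coefficients in the canonical basis `(|n⟩)ₙ`. -/
abbrev Seq : Type := ℕ → ℂ

/-- The `ℓ²` inner product `⟨φ, ψ⟩` (antilinear in the first argument). -/
def sInner (φ ψ : Seq) : ℂ := ∑' n, conj (φ n) * ψ n

/-- The squared `ℓ²` norm `‖φ‖²`. -/
def sNormSq (φ : Seq) : ℝ := ∑' n, ‖φ n‖ ^ 2

/-- Membership in `ℓ²(ℂ)`. -/
def MemL2 (φ : Seq) : Prop := Summable fun n => ‖φ n‖ ^ 2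

/-- The moment `⟨φ, 𝒩^k φ⟩` of the number operator, for a real exponent `k`. -/
def Nmom (k : ℝ) (φ : Seq) : ℝ := ∑' n : ℕ, (n : ℝ) ^ k * ‖φ n‖ ^ 2

/-- Finiteness of the moment `⟨φ, 𝒩^k φ⟩`. -/
def MemNmom (k : ℝ) (φ : Seq) : Prop := Summable fun n : ℕ => (n : ℝ) ^ k * ‖φ n‖ ^ 2

/-- The shifted moment `⟨φ, (𝒩+l)^k φ⟩`. -/
def NmomShift (k : ℝ) (l : ℕ) (φ : Seq) : ℝ := ∑' n : ℕ, ((n : ℝ) + l) ^ k * ‖φ n‖ ^ 2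

/-- Membership in the domain `D(𝒩^k)`, i.e. `φ ∈ ℓ²` and `𝒩^k φ ∈ ℓ²`. -/
def MemDomN (k : ℝ) (φ : Seq) : Prop := MemL2 φ ∧ MemNmom (2 * k) φ

/-- The annihilation operator `a`, acting on coefficients. -/
def opA (φ : Seq) : Seq := fun n => (Real.sqrt ((n : ℝ) + 1) : ℂ) * φ (n + 1)

/-- The creation operator `a*`, acting on coefficients (note `Real.sqrt 0 = 0` at `n = 0`). -/
def opAd (φ : Seq) : Seq := fun n => ((Real.sqrt (n : ℝ)) : ℂ) * φ (n - 1)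

/-- The order parameter `α_φ = ⟨φ, a φ⟩`. -/
def alphaOf (φ : Seq) : ℂ := sInner φ (opA φ)

/-- The mean-field operator
`h^φ = -J(α_φ a* + conj α_φ a - |α_φ|²) + (J-μ)𝒩 + (U/2)𝒩(𝒩-1)` applied to `ψ`. -/
def hMF (J μ U : ℝ) (φ ψ : Seq) : Seq := fun n =>
  (-(J : ℂ)) * (alphaOf φ * opAd ψ n + conj (alphaOf φ) * opA ψ n
      - ((‖alphaOf φ‖ : ℂ)) ^ 2 * ψ n)
    + (((J : ℂ) - (μ : ℂ)) * (n : ℂ) + ((U : ℂ) / 2) * (n : ℂ) * ((n : ℂ) - 1)) * ψ n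

/-- `φ : ℝ → Seq` solves the mean-field equation `i ∂ₜ φ(t) = h^{φ(t)} φ(t)`
(coefficientwise, with `φ(t) ∈ ℓ²` and finite number of particles). -/
def IsMFSolution (J μ U : ℝ) (φ : ℝ → Seq) : Prop :=
  (∀ t, MemL2 (φ t)) ∧ (∀ t, MemNmom 1 (φ t)) ∧
    ∀ t n, HasDerivAt (fun s => φ s n) (-Complex.I * hMF J μ U (φ t) (φ t) n) t

/-! ## The truncated mean-field dynamics -/

/-- The eigenvalue of the linear operator `A = (J-μ)𝒩 + (U/2)𝒩(𝒩-1)` on `|n⟩`. -/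
def Acoef (J μ U : ℝ) (n : ℕ) : ℂ :=
  ((J : ℂ) - (μ : ℂ)) * (n : ℂ) + ((U : ℂ) / 2) * (n : ℂ) * ((n : ℂ) - 1)

/-- The linear operator `A = (J-μ)𝒩 + (U/2)𝒩(𝒩-1)`. -/
def opALin (J μ U : ℝ) (ψ : Seq) : Seq := fun n => Acoef J μ U n * ψ n

/-- The unitary group `e^{-itA}` generated by `A`. -/
def expA (J μ U : ℝ) (t : ℝ) (φ : Seq) : Seq :=
  fun n => Complex.exp (-Complex.I * (t : ℂ) * Acoef J μ U n) * φ n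

/-- The truncated annihilation operator `a_M = a 1_{𝒩 ≤ M}`. -/
def opAM (M : ℝ) (φ : Seq) : Seq :=
  fun n => if (n : ℝ) + 1 ≤ M then (Real.sqrt ((n : ℝ) + 1) : ℂ) * φ (n + 1) else 0

/-- The truncated creation operator `a*_M = 1_{𝒩 ≤ M} a*`. -/
def opAdM (M : ℝ) (φ : Seq) : Seq := fun n => if (n : ℝ) ≤ M then opAd φ n else 0

/-- The truncated order parameter `α_M = ⟨φ, a_M φ⟩`. -/
def alphaM (M : ℝ) (φ : Seq) : ℂ := sInner φ (opAM M φ)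

/-- The truncated nonlinearity `F_M(φ) = -J(α_M a*_M + conj α_M a_M - |α_M|²) φ`. -/
def FM (J M : ℝ) (φ : Seq) : Seq := fun n =>
  (-(J : ℂ)) * (alphaM M φ * opAdM M φ n + conj (alphaM M φ) * opAM M φ n
    - ((‖alphaM M φ‖ : ℂ)) ^ 2 * φ n)

/-- The truncated mean-field operator `h_M^{α_M(φ)} = A - J(α_M a*_M + conj α_M a_M - |α_M|²)`
applied to `ψ`. -/
def hTrunc (J μ U M : ℝ) (φ ψ : Seq) : Seq := fun n =>
  opALin J μ U ψ n + (-(J : ℂ)) * (alphaM M φ * opAdM M ψ n + conj (alphaM M φ) * opAM M ψ n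
    - ((‖alphaM M φ‖ : ℂ)) ^ 2 * ψ n)

/-- Differentiability in the `ℓ²` sense at time `t`, with derivative `v`. -/
def HasL2DerivAt (φ : ℝ → Seq) (v : Seq) (t : ℝ) : Prop :=
  Tendsto (fun h : ℝ => sNormSq (fun n => (φ (t + h) n - φ t n) / (h : ℂ) - v n))
    (nhdsWithin 0 {(0 : ℝ)}ᶜ) (nhds 0)

/-- `φ : ℝ → Seq` is a (global, strong) solution of the truncated mean-field equation
`i ∂ₜ φ_M = A φ_M + F_M(φ_M)`, taking values in `D(𝒩²)`. -/
def IsTruncSolution (J μ U M : ℝ) (φ : ℝ → Seq) : Prop :=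
  (∀ t, MemDomN 2 (φ t)) ∧
    ∀ t, HasL2DerivAt φ (fun n => -Complex.I * hTrunc J μ U M (φ t) (φ t) n) t

/-- Continuity of `t ↦ φ(t)` in the norm of `D(𝒩²)`. -/
def ContinuousInDom2 (φ : ℝ → Seq) : Prop :=
  ∀ t, Tendsto (fun s =>
      sNormSq (fun n => φ s n - φ t n) + sNormSq (fun n => ((n : ℂ)) ^ 2 * (φ s n - φ t n)))
    (nhds t) (nhds 0)

/-- Continuity of `t ↦ v(t)` in the `ℓ²` norm. -/
def ContinuousInL2 (v : ℝ → Seq) : Prop :=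
  ∀ t, Tendsto (fun s => sNormSq (fun n => v s n - v t n)) (nhds t) (nhds 0)

/-- The (untruncated) nonlinearity `F(φ) = -J(α_φ a* + conj α_φ a - |α_φ|²) φ`. -/
def Ffull (J : ℝ) (φ : Seq) : Seq := fun n =>
  (-(J : ℂ)) * (alphaOf φ * opAd φ n + conj (alphaOf φ) * opA φ n
    - ((‖alphaOf φ‖ : ℂ)) ^ 2 * φ n)

/-! ## Operators on ℓ²(ℂ), given by their kernels (matrices) in the canonical basis -/

/-- The identity kernel. -/
def idKer : ℕ → ℕ → ℂ := fun m n => if m = n then 1 else 0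

/-- The kernel of the rank-one projection `p_φ = |φ⟩⟨φ|`. -/
def projKer (φ : Seq) : ℕ → ℕ → ℂ := fun m n => φ m * conj (φ n)

/-- The kernel of `q_φ = 1 - p_φ`. -/
def qKer (φ : Seq) : ℕ → ℕ → ℂ := fun m n => idKer m n - projKer φ m n

/-- The product of two kernels. -/
def kerMul (A B : ℕ → ℕ → ℂ) : ℕ → ℕ → ℂ := fun m n => ∑' k, A m k * B k n

/-- The trace of a kernel. -/
def kerTr (A : ℕ → ℕ → ℂ) : ℂ := ∑' m, A m m

/-- A kernel is positive semidefinite: hermitian with nonnegative quadratic form. -/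
def kerPosSemidef (γ : ℕ → ℕ → ℂ) : Prop :=
  (∀ m n, γ n m = conj (γ m n)) ∧
    ∀ v : ℕ →₀ ℂ, 0 ≤ (∑ m ∈ v.support, ∑ n ∈ v.support, conj (v m) * γ m n * v n).re

/-- `c` is a bound for the operator norm of the kernel `B`. -/
def kerOpNormBound (B : ℕ → ℕ → ℂ) (c : ℝ) : Prop :=
  ∀ v w : ℕ →₀ ℂ,
    ‖∑ m ∈ v.support, ∑ n ∈ w.support, conj (v m) * B m n * w n‖ ≤
      c * Real.sqrt (∑ m ∈ v.support, ‖v m‖ ^ 2) * Real.sqrt (∑ n ∈ w.support, ‖w n‖ ^ 2)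

/-- The operator norm of a kernel. -/
def kerOpNorm (B : ℕ → ℕ → ℂ) : ℝ := sInf {c | 0 ≤ c ∧ kerOpNormBound B c}

/-- The trace norm `‖T‖_{L¹}`, via duality with bounded operators:
`‖T‖₁ = sup { |Tr(T B)| : ‖B‖ ≤ 1 }`. -/
def traceNorm (T : ℕ → ℕ → ℂ) : ℝ :=
  sSup {r | ∃ B z, kerOpNormBound B 1 ∧
      HasSum (fun q : ℕ × ℕ => T q.1 q.2 * B q.2 q.1) z ∧ r = ‖z‖}

/-- The kernel of `q_φ g(𝒩) q_φ` for a diagonal operator `g(𝒩)`. -/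
def qDiagq (g : ℕ → ℝ) (φ : Seq) : ℕ → ℕ → ℂ := fun m n =>
  (if m = n then ((g m : ℝ) : ℂ) else 0)
    - (((g m : ℝ) : ℂ) + ((g n : ℝ) : ℂ)) * (φ m * conj (φ n))
    + (∑' j, ((g j : ℝ) : ℂ) * ((‖φ j‖ : ℂ)) ^ 2) * (φ m * conj (φ n))

/-! ## The lattice `Λ = (ℤ/LZ)^d` and the Fock space `ℱ = ℓ²(ℂ)^{⊗|Λ|}` -/

/-- A lattice site of `Λ = (ℤ/Lℤ)^d`. -/
abbrev Site (d L : ℕ) : Type := Fin d → ZMod L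

/-- An occupation-number configuration, labeling the canonical basis of `ℱ`. -/
abbrev Cfg (d L : ℕ) : Type := Site d L → ℕ

/-- A vector of the Fock space `ℱ`, given by its coefficients. -/
abbrev FSeq (d L : ℕ) : Type := Cfg d L → ℂ

/-- The kernel of an operator on the Fock space `ℱ`. -/
abbrev FKer (d L : ℕ) : Type := Cfg d L → Cfg d L → ℂ

/-- Nearest neighbours in `Λ`. -/
def nbr {d L : ℕ} (x y : Site d L) : Prop :=
  ∃ i : Fin d, y = Function.update x i (x i + 1) ∨ y = Function.update x i (x i - 1)

/-- The annihilation operator `a_x` at site `x`. -/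
def fA {d L : ℕ} (x : Site d L) (ψ : FSeq d L) : FSeq d L :=
  fun n => (Real.sqrt ((n x : ℝ) + 1) : ℂ) * ψ (Function.update n x (n x + 1))

/-- The creation operator `a*_x` at site `x`. -/
def fAd {d L : ℕ} (x : Site d L) (ψ : FSeq d L) : FSeq d L :=
  fun n => ((Real.sqrt (n x : ℝ)) : ℂ) * ψ (Function.update n x (n x - 1))

open scoped Classical in
/-- The Bose–Hubbard Hamiltonian
`H_d = -(J/2d) Σ_{⟨x,y⟩}(a*_x a_y + a*_y a_x) + Σ_x ((J-μ)𝒩_x + (U/2)𝒩_x(𝒩_x-1))`,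
where the sum over unordered nearest-neighbour pairs of `a*_x a_y + a*_y a_x` is written as
the sum over ordered nearest-neighbour pairs of `a*_x a_y`. -/
def HBH (d L : ℕ) [NeZero L] (J μ U : ℝ) (ψ : FSeq d L) : FSeq d L := fun n =>
  (-(J : ℂ) / (2 * (d : ℂ))) *
      ∑ x : Site d L, ∑ y : Site d L, (if nbr x y then fAd x (fA y ψ) n else 0)
    + (∑ x : Site d L, Acoef J μ U (n x)) * ψ n

/-- `Ψ : ℝ → FSeq d L` is a normalized solution of the Schrödinger equation
`i ∂ₜ Ψ = H_d Ψ` (coefficientwise). -/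
def IsSchrodingerSolution (d L : ℕ) [NeZero L] (J μ U : ℝ) (Ψ : ℝ → FSeq d L) : Prop :=
  (∀ t, HasSum (fun n => ‖Ψ t n‖ ^ 2) 1) ∧
    ∀ t n, HasDerivAt (fun s => Ψ s n) (-Complex.I * HBH d L J μ U (Ψ t) n) t

/-- `γ : ℝ → FKer d L` solves the von Neumann equation `i ∂ₜ γ = [H_d, γ]`
(coefficientwise; we use that the matrix of `H_d` in the canonical basis is real symmetric). -/
def IsVNSolution (d L : ℕ) [NeZero L] (J μ U : ℝ) (γ : ℝ → FKer d L) : Prop :=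
  ∀ t m n, HasDerivAt (fun s => γ s m n)
    (-Complex.I * (HBH d L J μ U (fun k => γ t k n) m - HBH d L J μ U (fun k => γ t m k) n)) t

/-- A Fock-space kernel is positive semidefinite. -/
def FKerPosSemidef {d L : ℕ} (γ : FKer d L) : Prop :=
  (∀ m n, γ n m = conj (γ m n)) ∧
    ∀ v : Cfg d L →₀ ℂ, 0 ≤ (∑ m ∈ v.support, ∑ n ∈ v.support, conj (v m) * γ m n * v n).re

/-- (Diagonal) trace-class condition for a positive Fock-space kernel. -/
def FKerTraceClass {d L : ℕ} (γ : FKer d L) : Prop := Summable fun n => (γ n n).re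

/-- The kernel has trace one. -/
def FKerTraceOne {d L : ℕ} (γ : FKer d L) : Prop := HasSum (fun n => γ n n) 1

/-- The one-lattice-site reduced density matrix
`γ^{(1)} = (1/|Λ|) Σ_{x∈Λ} Tr_{Λ∖{x}} γ`, as a kernel on `ℕ`. -/
def reduced1 (d L : ℕ) [NeZero L] (γ : FKer d L) : ℕ → ℕ → ℂ := fun j k =>
  (1 / ((L : ℂ) ^ d)) * ∑ x : Site d L,
    ∑' c : Cfg d L, if c x = 0 then γ (Function.update c x j) (Function.update c x k) else 0

/-- The trace `Tr(γ H_d)` (using that the matrix of `H_d` is real symmetric). -/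
def trGammaH (d L : ℕ) [NeZero L] (J μ U : ℝ) (γ : FKer d L) : ℂ :=
  ∑' n : Cfg d L, HBH d L J μ U (fun k => γ n k) n

/-! ## Wave-function expressions on Fock space -/

/-- The inner product on Fock space. -/
def fInner {d L : ℕ} (Φ Ψ : FSeq d L) : ℂ := ∑' n, conj (Φ n) * Ψ n

/-- The projection `p_x = |φ⟩⟨φ|` acting at site `x`. -/
def fP {d L : ℕ} (φ : Seq) (x : Site d L) (ψ : FSeq d L) : FSeq d L :=
  fun n => φ (n x) * ∑' k, conj (φ k) * ψ (Function.update n x k)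

/-- The complementary projection `q_x = 1 - p_x` acting at site `x`. -/
def fQ {d L : ℕ} (φ : Seq) (x : Site d L) (ψ : FSeq d L) : FSeq d L :=
  fun n => ψ n - fP φ x ψ n

/-- The mean-field operator `h^φ_x` acting at site `x`. -/
def fHmf {d L : ℕ} (J μ U : ℝ) (φ : Seq) (x : Site d L) (ψ : FSeq d L) : FSeq d L :=
  fun n => (-(J : ℂ)) * (alphaOf φ * fAd x ψ n + conj (alphaOf φ) * fA x ψ n
      - ((‖alphaOf φ‖ : ℂ)) ^ 2 * ψ n)
    + Acoef J μ U (n x) * ψ n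

/-- `K^{(2)}_{x,y} = a*_x a_y + a*_y a_x`. -/
def fK2 {d L : ℕ} (x y : Site d L) (ψ : FSeq d L) : FSeq d L :=
  fun n => fAd x (fA y ψ) n + fAd y (fA x ψ) n

/-- `K^{(3)}_{x,y} = K^{(2)}_{x,y} - α_φ a*_x - conj α_φ a_x`. -/
def fK3 {d L : ℕ} (φ : Seq) (x y : Site d L) (ψ : FSeq d L) : FSeq d L :=
  fun n => fK2 x y ψ n - alphaOf φ * fAd x ψ n - conj (alphaOf φ) * fA x ψ n

/-- `K^{(4)}_{x,y} = K^{(3)}_{x,y} - α_φ a*_y - conj α_φ a_y + 2|α_φ|²`. -/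
def fK4 {d L : ℕ} (φ : Seq) (x y : Site d L) (ψ : FSeq d L) : FSeq d L :=
  fun n => fK3 φ x y ψ n - alphaOf φ * fAd y ψ n - conj (alphaOf φ) * fA y ψ n
    + 2 * ((‖alphaOf φ‖ : ℂ)) ^ 2 * ψ n

open scoped Classical in
/-- The expectation `⟨Ψ, H̃ Ψ⟩` of the excitation Hamiltonian `H̃`; sums over unordered
nearest-neighbour pairs are written as half the sums over ordered pairs, and `+h.c.`
contributes a factor `2 Re`. -/
def tildeHExp (d L : ℕ) [NeZero L] (J : ℝ) (φ : Seq) (Ψ : FSeq d L) : ℝ :=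
  (-(J / (2 * d))) * (1 / 2) *
      ∑ x : Site d L, ∑ y : Site d L, (if nbr x y then
        2 * (fInner Ψ (fP φ x (fP φ y (fK2 x y (fQ φ x (fQ φ y Ψ)))))).re
          + 2 * (fInner Ψ (fP φ x (fQ φ y (fK2 x y (fQ φ x (fP φ y Ψ)))))).re
        else 0)
    + (-(J / d)) * (1 / 2) *
      ∑ x : Site d L, ∑ y : Site d L, (if nbr x y then
        2 * (fInner Ψ (fP φ x (fQ φ y (fK3 φ x y (fQ φ x (fQ φ y Ψ)))))).re else 0)
    + (-(J / (2 * d))) * (1 / 2) *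
      ∑ x : Site d L, ∑ y : Site d L, (if nbr x y then
        (fInner Ψ (fQ φ x (fQ φ y (fK4 φ x y (fQ φ x (fQ φ y Ψ)))))).re else 0)

/-- The quantity `g(t) = (1/|Λ|) Σ_x ⟨Ψ, (q_x 𝒩_x² q_x + q_x) Ψ⟩`. -/
def gFunc (d L : ℕ) [NeZero L] (φ : Seq) (Ψ : FSeq d L) : ℝ :=
  (1 / (L : ℝ) ^ d) * ∑ x : Site d L,
    ((fInner Ψ (fQ φ x (fun n => ((n x : ℂ)) ^ 2 * fQ φ x Ψ n))).re
      + (fInner Ψ (fQ φ x Ψ)).re)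

/-- The quantity `f(t) = (1/|Λ|) ⟨Ψ, (H_d + Σ_x (q_x h^φ_x q_x - h^φ_x + c q_x)) Ψ⟩`. -/
def fFunc (d L : ℕ) [NeZero L] (J μ U c : ℝ) (φ : Seq) (Ψ : FSeq d L) : ℝ :=
  (1 / (L : ℝ) ^ d) * (fInner Ψ (fun n => HBH d L J μ U Ψ n +
    ∑ x : Site d L,
      (fQ φ x (fHmf J μ U φ x (fQ φ x Ψ)) n - fHmf J μ U φ x Ψ n + (c : ℂ) * fQ φ x Ψ n))).re

/-- The time-dependent constant `C̃(s)` in the Gronwall estimate for `f`. -/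
def Ctilde (J U C1 : ℝ) (φ0 : Seq) (s : ℝ) : ℝ :=
  (C1 / U) * (1 + 1 / U + (Nmom 1 φ0) ^ 2) *
    (1 + ∑ j ∈ Finset.range 7,
      (8 * J * Real.sqrt (Nmom 1 φ0)) ^ j * NmomShift (4 - (j : ℝ) / 2) j φ0 * s ^ j
        / (Nat.factorial j))

/-! Each truncated solution satisfies the Duhamel formula coefficientwise, by variation of
constants for the scalar equation of its `n`-th coefficient. The truncated dynamics conserves
`∑ w(n) |ψₙ|²` for every weight `w` with constant increments `c`, since for such `w` the
expectation `⟨ψ, w(𝒩) h_M ψ⟩` stays real: moving `w(𝒩)` across the hopping terms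
`α_M a*_M + conj α_M a_M` costs only the real term `c |α_M|²`. In particular the norm and `⟨𝒩⟩`
are conserved. With these bounds, Cauchy–Schwarz turns the strong convergence `φ_M(s) → φ(s)`
into `α_M(φ_M(s)) → α(φ(s))` and bounds the integrands uniformly in `M` and `s`, so dominated
convergence passes to the limit in the truncated Duhamel formulas. -/

lemma memL2_iff_memℓp {f : Seq} : MemL2 f ↔ Memℓp f 2 := by
  rw [memℓp_gen_iff (by norm_num)]
  simp [MemL2]

lemma MemL2.add {f g : Seq} (hf : MemL2 f) (hg : MemL2 g) : MemL2 (f + g) :=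
  memL2_iff_memℓp.2 ((memL2_iff_memℓp.1 hf).add (memL2_iff_memℓp.1 hg))

lemma MemL2.sub {f g : Seq} (hf : MemL2 f) (hg : MemL2 g) : MemL2 (f - g) :=
  memL2_iff_memℓp.2 ((memL2_iff_memℓp.1 hf).sub (memL2_iff_memℓp.1 hg))

lemma MemL2.const_mul {f : Seq} (hf : MemL2 f) (c : ℂ) : MemL2 (fun n => c * f n) :=
  memL2_iff_memℓp.2 ((memL2_iff_memℓp.1 hf).const_smul c)

lemma memL2_of_support_subset {f : Seq} (s : Finset ℕ) (hf : ∀ n ∉ s, f n = 0) : MemL2 f :=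
  summable_of_ne_finset_zero (s := s) fun n hn => by simp [hf n hn]

lemma sq_norm_le_sNormSq {f : Seq} (hf : MemL2 f) (n : ℕ) : ‖f n‖ ^ 2 ≤ sNormSq f :=
  hf.le_tsum n fun _ _ => sq_nonneg _

lemma norm_le_sqrt_sNormSq {f : Seq} (hf : MemL2 f) (n : ℕ) : ‖f n‖ ≤ √(sNormSq f) :=
  Real.le_sqrt_of_sq_le (sq_norm_le_sNormSq hf n)

lemma tendsto_apply_of_tendsto_sNormSq {ι : Type*} {l : Filter ι} {f : ι → Seq} {g : Seq}
    (hf : ∀ i, MemL2 (f i - g)) (h : Tendsto (fun i => sNormSq (f i - g)) l (nhds 0)) (n : ℕ) :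
    Tendsto (fun i => f i n) l (nhds (g n)) := by
  have hsq : Tendsto (fun i => ‖f i n - g n‖ ^ 2) l (nhds 0) :=
    squeeze_zero (fun _ => sq_nonneg _) (fun i => sq_norm_le_sNormSq (hf i) n) h
  have := hsq.sqrt
  simp only [Real.sqrt_sq (norm_nonneg _), Real.sqrt_zero] at this
  exact tendsto_iff_norm_sub_tendsto_zero.2 this

lemma sum_range_le_tsum_shift {f : ℕ → ℝ} (hf : Summable f) (h0 : ∀ n, 0 ≤ f n) (M : ℕ) :
    ∑ n ∈ Finset.range M, f (n + 1) ≤ ∑' n, f n := by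
  calc ∑ n ∈ Finset.range M, f (n + 1) ≤ ∑ n ∈ Finset.range (M + 1), f n := by
        rw [Finset.sum_range_succ']; exact le_add_of_nonneg_right (h0 0)
    _ ≤ ∑' n, f n := hf.sum_le_tsum _ fun n _ => h0 n

lemma summable_mul_sq_norm_of_tendsto_apply {ι : Type*} {l : Filter ι} [l.NeBot] {f : ι → Seq}
    {g : Seq} {w : ℕ → ℝ} (hw : ∀ n, 0 ≤ w n) {C : ℝ}
    (hf : ∀ i, Summable fun n => w n * ‖f i n‖ ^ 2)
    (hC : ∀ i, ∑' n, w n * ‖f i n‖ ^ 2 ≤ C) (hlim : ∀ n, Tendsto (fun i => f i n) l (nhds (g n))) :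
    Summable fun n => w n * ‖g n‖ ^ 2 := by
  refine summable_of_sum_range_le (c := C) (fun n => by have := hw n; positivity) fun N => ?_
  refine le_of_tendsto (tendsto_finsetSum _ fun n _ => ((hlim n).norm.pow 2).const_mul (w n))
    (Eventually.of_forall fun i => ?_)
  exact ((hf i).sum_le_tsum _ fun n _ => by have := hw n; positivity).trans (hC i)

lemma HasL2DerivAt.hasDerivAt_apply {ψ : ℝ → Seq} {v : Seq} {t : ℝ} (hψ : ∀ s, MemL2 (ψ s))
    (hv : MemL2 v) (hd : HasL2DerivAt ψ v t) (n : ℕ) :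
    HasDerivAt (fun s => ψ s n) (v n) t := by
  have hq : ∀ h : ℝ, MemL2 ((fun k => (ψ (t + h) k - ψ t k) / (h : ℂ)) - v) := fun h => by
    simpa only [MemL2, Pi.sub_apply, div_eq_inv_mul] using
      (((hψ (t + h)).sub (hψ t)).const_mul (h : ℂ)⁻¹).sub hv
  rw [hasDerivAt_iff_tendsto_slope_zero]
  simpa [div_eq_inv_mul] using tendsto_apply_of_tendsto_sNormSq hq hd n

lemma MemDomN.summable_pow_mul {φ : Seq} (h : MemDomN 2 φ) {k : ℕ} (hk : k ≤ 4) :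
    Summable fun n : ℕ => (n : ℝ) ^ k * ‖φ n‖ ^ 2 := by
  have h4 : Summable fun n : ℕ => (n : ℝ) ^ 4 * ‖φ n‖ ^ 2 := by
    have h2 := h.2
    rw [MemNmom, show (2 : ℝ) * 2 = (4 : ℕ) by norm_num] at h2
    simpa only [Real.rpow_natCast] using h2
  refine (Summable.add h.1 h4).of_nonneg_of_le (fun n => by positivity) fun n => ?_
  rw [← one_add_mul]
  gcongr
  rcases Nat.eq_zero_or_pos n with rfl | hn
  · rcases k.eq_zero_or_pos with rfl | hk0
    · simp
    · simp [hk0.ne']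
  · have : (1 : ℝ) ≤ n := by exact_mod_cast hn
    linarith [pow_le_pow_right₀ this hk]

lemma MemDomN.summable_natCast_mul {φ : Seq} (h : MemDomN 2 φ) :
    Summable fun n : ℕ => n * ‖φ n‖ ^ 2 := by
  simpa using h.summable_pow_mul (k := 1) (by norm_num)

lemma MemDomN.memL2_pow_mul {φ : Seq} (h : MemDomN 2 φ) {j : ℕ} (hj : j ≤ 2) :
    MemL2 fun n => (n : ℂ) ^ j * φ n := by
  simpa [MemL2, mul_pow, ← pow_mul, mul_comm j] using h.summable_pow_mul (k := 2 * j) (by omega)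

lemma MemDomN.memL2_opALin {φ : Seq} (h : MemDomN 2 φ) (J μ U : ℝ) :
    MemL2 (opALin J μ U φ) := by
  have e : opALin J μ U φ = (fun n : ℕ => ((J : ℂ) - μ - U / 2) * ((n : ℂ) ^ 1 * φ n)) +
      fun n : ℕ => ((U : ℂ) / 2) * ((n : ℂ) ^ 2 * φ n) := by
    funext n; simp only [opALin, Acoef, Pi.add_apply]; ring
  rw [e]
  exact ((h.memL2_pow_mul (by norm_num)).const_mul _).add ((h.memL2_pow_mul le_rfl).const_mul _)

lemma memL2_FM {z : Seq} (hz : MemL2 z) (J M : ℝ) : MemL2 (FM J M z) := by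
  have e : FM J M z = (fun n => (-(J : ℂ)) * (alphaM M z * opAdM M z n
      + conj (alphaM M z) * opAM M z n)) + fun n => ((J : ℂ) * (‖alphaM M z‖ : ℂ) ^ 2) * z n := by
    funext n; simp only [FM, Pi.add_apply]; ring
  rw [e]
  refine MemL2.add (memL2_of_support_subset (Finset.range (⌊M⌋₊ + 1)) fun n hn => ?_)
    (hz.const_mul _)
  have hM : ¬ (n : ℝ) ≤ M := fun h => hn (Finset.mem_range_succ_iff.2 (Nat.le_floor h))
  have hM' : ¬ (n : ℝ) + 1 ≤ M := fun h => hM (by linarith)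
  simp [opAdM, opAM, hM, hM']

lemma IsTruncSolution.hasDerivAt_apply {J μ U M : ℝ} {ψ : ℝ → Seq}
    (hs : IsTruncSolution J μ U M ψ) (t : ℝ) (n : ℕ) :
    HasDerivAt (fun s => ψ s n) (-I * hTrunc J μ U M (ψ t) (ψ t) n) t := by
  have hv : MemL2 (opALin J μ U (ψ t) + FM J M (ψ t)) :=
    ((hs.1 t).memL2_opALin J μ U).add (memL2_FM (hs.1 t).1 J M)
  exact (hs.2 t).hasDerivAt_apply (fun s => (hs.1 s).1) (hv.const_mul (-I)) n

lemma IsTruncSolution.continuous_apply {J μ U M : ℝ} {ψ : ℝ → Seq}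
    (hs : IsTruncSolution J μ U M ψ) (n : ℕ) : Continuous fun s => ψ s n :=
  continuous_iff_continuousAt.2 fun t => (hs.hasDerivAt_apply t n).continuousAt

section Truncation

variable {M n : ℕ} {z : Seq}

lemma opAdM_natCast_of_le (h : n ≤ M) : opAdM M z n = opAd z n :=
  if_pos (by exact_mod_cast h)

lemma opAdM_natCast_of_lt (h : M < n) : opAdM M z n = 0 :=
  if_neg (by exact_mod_cast h.not_ge)

lemma opAM_natCast_of_lt (h : n < M) : opAM M z n = opA z n :=
  if_pos (by exact_mod_cast h)

lemma opAM_natCast_of_le (h : M ≤ n) : opAM M z n = 0 :=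
  if_neg (by exact_mod_cast (Nat.lt_succ_of_le h).not_ge)

lemma alphaM_natCast_eq_sum (M : ℕ) (z : Seq) :
    alphaM M z = ∑ n ∈ Finset.range M, conj (z n) * opA z n := by
  rw [alphaM, sInner, tsum_eq_sum (s := Finset.range M) fun n hn => by
    rw [opAM_natCast_of_le (by simpa using hn), mul_zero]]
  exact Finset.sum_congr rfl fun n hn => by rw [opAM_natCast_of_lt (Finset.mem_range.1 hn)]

end Truncation

lemma Acoef_im (J μ U : ℝ) (n : ℕ) : (Acoef J μ U n).im = 0 := by
  simp [Acoef]

lemma im_mul_add_conj_mul_eq_zero {α P Q : ℂ} {c : ℝ} (h : conj P = Q + c * α) :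
    (α * P + conj α * Q).im = 0 := by
  obtain rfl : Q = conj P - c * α := by rw [h]; ring
  simp only [add_im, mul_im, sub_re, sub_im, conj_re, conj_im, mul_re, ofReal_re, ofReal_im]
  ring

section Conservation

variable {J μ U : ℝ} {w : ℕ → ℝ} {c : ℝ}

lemma conj_sum_weight_opAdM (hw : ∀ k, w (k + 1) = w k + c) (M : ℕ) (z : Seq) :
    conj (∑ n ∈ Finset.range (M + 1), w n * (conj (z n) * opAdM M z n))
      = ∑ n ∈ Finset.range (M + 1), w n * (conj (z n) * opAM M z n) + c * alphaM M z := by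
  rw [Finset.sum_range_succ', Finset.sum_range_succ, opAM_natCast_of_le le_rfl,
    alphaM_natCast_eq_sum, opAdM_natCast_of_le (Nat.zero_le M), Finset.mul_sum]
  simp only [opAd, opA, CharP.cast_eq_zero, Real.sqrt_zero, ofReal_zero, zero_mul, mul_zero,
    add_zero, map_sum, ← Finset.sum_add_distrib]
  refine Finset.sum_congr rfl fun n hn => ?_
  rw [opAdM_natCast_of_le (Finset.mem_range.1 hn), opAM_natCast_of_lt (Finset.mem_range.1 hn)]
  simp only [opAd, opA, hw, map_mul, conj_conj, conj_ofReal, Nat.cast_succ]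
  push_cast
  ring

lemma conj_mul_hTrunc_self (M : ℝ) (z : Seq) (n : ℕ) :
    conj (z n) * hTrunc J μ U M z z n
      = (Acoef J μ U n + J * ‖alphaM M z‖ ^ 2) * (‖z n‖ ^ 2 : ℝ)
        - J * (alphaM M z * (conj (z n) * opAdM M z n)
          + conj (alphaM M z) * (conj (z n) * opAM M z n)) := by
  rw [ofReal_pow, ← conj_mul' (z n)]
  simp only [hTrunc, opALin]
  ring

lemma im_sum_weight_mul_hTrunc (hw : ∀ k, w (k + 1) = w k + c) (M : ℕ) (z : Seq) :
    (∑ n ∈ Finset.range (M + 1), w n * (conj (z n) * hTrunc J μ U M z z n)).im = 0 := by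
  have hsplit : ∑ n ∈ Finset.range (M + 1), w n * (conj (z n) * hTrunc J μ U M z z n)
      = ∑ n ∈ Finset.range (M + 1), w n * ((Acoef J μ U n + J * ‖alphaM M z‖ ^ 2) * (‖z n‖ ^ 2 : ℝ))
        - J * (alphaM M z * ∑ n ∈ Finset.range (M + 1), w n * (conj (z n) * opAdM M z n)
          + conj (alphaM M z) * ∑ n ∈ Finset.range (M + 1), w n * (conj (z n) * opAM M z n)) := by
    simp only [conj_mul_hTrunc_self, Finset.mul_sum, ← Finset.sum_sub_distrib,
      ← Finset.sum_add_distrib]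
    exact Finset.sum_congr rfl fun n _ => by ring
  rw [hsplit, sub_im, im_ofReal_mul, im_mul_add_conj_mul_eq_zero (conj_sum_weight_opAdM hw M z),
    im_sum]
  simp [Acoef_im, ← ofReal_pow]

lemma im_conj_mul_hTrunc_of_lt {M n : ℕ} (h : M < n) (z : Seq) :
    (conj (z n) * hTrunc J μ U M z z n).im = 0 := by
  simp [conj_mul_hTrunc_self, opAdM_natCast_of_lt h, opAM_natCast_of_le h.le, Acoef_im,
    ← ofReal_pow]

lemma IsTruncSolution.hasDerivAt_sq_norm_apply {M : ℝ} {ψ : ℝ → Seq}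
    (hs : IsTruncSolution J μ U M ψ) (t : ℝ) (n : ℕ) : HasDerivAt (fun s => ‖ψ s n‖ ^ 2)
      (2 * (conj (ψ t n) * hTrunc J μ U M (ψ t) (ψ t) n).im) t := by
  convert (hs.hasDerivAt_apply t n).norm_sq using 2
  rw [Complex.inner, mul_assoc, neg_mul, neg_re, I_mul_re, neg_neg, mul_comm]

variable {M : ℕ} {ψ : ℝ → Seq}

lemma IsTruncSolution.sq_norm_apply_eq_of_lt (hs : IsTruncSolution J μ U M ψ) {n : ℕ}
    (h : M < n) (t : ℝ) : ‖ψ t n‖ ^ 2 = ‖ψ 0 n‖ ^ 2 := by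
  have hD : ∀ s, HasDerivAt (fun u => ‖ψ u n‖ ^ 2) 0 s := fun s => by
    simpa [im_conj_mul_hTrunc_of_lt h] using hs.hasDerivAt_sq_norm_apply s n
  exact is_const_of_deriv_eq_zero (fun s => (hD s).differentiableAt) (fun s => (hD s).deriv) t 0

lemma IsTruncSolution.sum_weight_mul_sq_norm_eq (hs : IsTruncSolution J μ U M ψ)
    (hw : ∀ k, w (k + 1) = w k + c) (t : ℝ) :
    ∑ n ∈ Finset.range (M + 1), w n * ‖ψ t n‖ ^ 2
      = ∑ n ∈ Finset.range (M + 1), w n * ‖ψ 0 n‖ ^ 2 := by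
  have hD : ∀ s, HasDerivAt (fun u => ∑ n ∈ Finset.range (M + 1), w n * ‖ψ u n‖ ^ 2) 0 s := by
    intro s
    refine (HasDerivAt.fun_sum fun n _ =>
      (hs.hasDerivAt_sq_norm_apply s n).const_mul (w n)).congr_deriv ?_
    have h := im_sum_weight_mul_hTrunc (J := J) (μ := μ) (U := U) hw M (ψ s)
    simp only [im_sum, im_ofReal_mul] at h
    simp only [mul_left_comm _ (2 : ℝ), ← Finset.mul_sum, h, mul_zero]
  exact is_const_of_deriv_eq_zero (fun s => (hD s).differentiableAt) (fun s => (hD s).deriv) t 0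

lemma IsTruncSolution.tsum_weight_mul_sq_norm_eq (hs : IsTruncSolution J μ U M ψ)
    (hw : ∀ k, w (k + 1) = w k + c) (hsum : ∀ s, Summable fun n => w n * ‖ψ s n‖ ^ 2)
    (t : ℝ) : ∑' n, w n * ‖ψ t n‖ ^ 2 = ∑' n, w n * ‖ψ 0 n‖ ^ 2 := by
  rw [← (hsum t).sum_add_tsum_nat_add (M + 1), ← (hsum 0).sum_add_tsum_nat_add (M + 1),
    hs.sum_weight_mul_sq_norm_eq hw t]
  congr 1
  exact tsum_congr fun n => by rw [hs.sq_norm_apply_eq_of_lt (by omega) t]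

lemma IsTruncSolution.sNormSq_eq (hs : IsTruncSolution J μ U M ψ) (t : ℝ) :
    sNormSq (ψ t) = sNormSq (ψ 0) := by
  simpa [sNormSq] using hs.tsum_weight_mul_sq_norm_eq (w := fun _ => 1) (c := 0) (by simp)
    (fun s => by simpa [MemL2] using (hs.1 s).1) t

lemma IsTruncSolution.tsum_mul_sq_norm_eq (hs : IsTruncSolution J μ U M ψ) (t : ℝ) :
    ∑' n : ℕ, n * ‖ψ t n‖ ^ 2 = ∑' n : ℕ, n * ‖ψ 0 n‖ ^ 2 :=
  hs.tsum_weight_mul_sq_norm_eq (w := fun n => n) (c := 1) (by simp)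
    (fun s => (hs.1 s).summable_natCast_mul) t

end Conservation

lemma norm_sum_conj_mul_le {ι : Type*} (s : Finset ι) (f g : ι → ℂ) :
    ‖∑ i ∈ s, conj (f i) * g i‖ ≤ √(∑ i ∈ s, ‖f i‖ ^ 2) * √(∑ i ∈ s, ‖g i‖ ^ 2) :=
  (norm_sum_le _ _).trans <| by
    simpa only [norm_mul, RCLike.norm_conj] using Real.sum_mul_le_sqrt_mul_sqrt s _ _

lemma sq_norm_opA (z : Seq) (n : ℕ) : ‖opA z n‖ ^ 2 = (n + 1) * ‖z (n + 1)‖ ^ 2 := by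
  rw [opA, norm_mul, mul_pow, norm_real, Real.norm_eq_abs, sq_abs, Real.sq_sqrt (by positivity)]

/-- Cauchy–Schwarz, with the weight `√(n+1)` of `a` put on the side of `χ` for the first
difference term and on the side of `ζ` for the second. -/
lemma norm_alphaM_sub_sum_le (M : ℕ) {χ ζ : Seq} (hχζ : MemL2 (χ - ζ))
    (hχ : Summable fun n : ℕ => n * ‖χ n‖ ^ 2) (hζ : Summable fun n : ℕ => (n + 1) * ‖ζ n‖ ^ 2) :
    ‖alphaM M χ - ∑ n ∈ Finset.range M, conj (ζ n) * opA ζ n‖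
      ≤ (√(∑' n : ℕ, n * ‖χ n‖ ^ 2) + √(∑' n : ℕ, (n + 1) * ‖ζ n‖ ^ 2)) * √(sNormSq (χ - ζ)) := by
  have e : alphaM M χ - ∑ n ∈ Finset.range M, conj (ζ n) * opA ζ n
      = ∑ n ∈ Finset.range M, conj ((χ - ζ) n) * opA χ n
        + ∑ n ∈ Finset.range M, conj ((√(n + 1) : ℝ) * ζ n) * (χ - ζ) (n + 1) := by
    rw [alphaM_natCast_eq_sum, ← Finset.sum_sub_distrib, ← Finset.sum_add_distrib]
    refine Finset.sum_congr rfl fun n _ => ?_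
    simp only [opA, Pi.sub_apply, map_sub, map_mul, conj_ofReal]
    ring
  have hS : ∀ n, 0 ≤ ‖(χ - ζ) n‖ ^ 2 := fun n => sq_nonneg _
  have h1 := hχζ.sum_le_tsum (Finset.range M) fun n _ => hS n
  have h2 := sum_range_le_tsum_shift hχζ hS M
  have h3 := sum_range_le_tsum_shift hχ (fun n => by positivity) M
  have h4 := hζ.sum_le_tsum (Finset.range M) fun n _ => by positivity
  rw [e, add_mul]
  refine (norm_add_le _ _).trans (add_le_add ?_ ?_)
  · refine (norm_sum_conj_mul_le _ _ _).trans ?_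
    rw [mul_comm]
    gcongr
    · simpa only [sq_norm_opA, Nat.cast_succ] using h3
    · exact h1
  · refine (norm_sum_conj_mul_le _ _ _).trans ?_
    gcongr
    · simpa (disch := positivity) only [norm_mul, norm_real, Real.norm_eq_abs, mul_pow, sq_abs,
        Real.sq_sqrt] using h4
    · exact h2

lemma norm_alphaM_natCast_le (M : ℕ) {z : Seq} (hz : MemL2 z)
    (hz1 : Summable fun n : ℕ => n * ‖z n‖ ^ 2) :
    ‖alphaM M z‖ ≤ √(∑' n : ℕ, n * ‖z n‖ ^ 2) * √(sNormSq z) := by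
  simpa using norm_alphaM_sub_sum_le M (ζ := 0) (by simpa using hz) hz1 (by simp)

lemma summable_conj_mul_opA {z : Seq} (hz : MemL2 z) (hz1 : Summable fun n : ℕ => n * ‖z n‖ ^ 2) :
    Summable fun n => conj (z n) * opA z n := by
  refine Summable.of_norm_bounded ((Summable.add hz ((summable_nat_add_iff 1).2 hz1)).div_const 2)
    fun n => ?_
  have := two_mul_le_add_sq ‖z n‖ ‖opA z n‖
  rw [sq_norm_opA] at this
  simp only [norm_mul, RCLike.norm_conj, Nat.cast_succ] at this ⊢
  linarith

lemma tendsto_alphaM_natCast {χ : ℕ → Seq} {ζ : Seq} {C : ℝ} (hχ : ∀ M, MemL2 (χ M))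
    (hχ1 : ∀ M, Summable fun n : ℕ => n * ‖χ M n‖ ^ 2) (hC : ∀ M, ∑' n : ℕ, n * ‖χ M n‖ ^ 2 ≤ C)
    (hζ : MemL2 ζ) (hlim : Tendsto (fun M => sNormSq (χ M - ζ)) atTop (nhds 0)) :
    Tendsto (fun M : ℕ => alphaM M (χ M)) atTop (nhds (alphaOf ζ)) := by
  have hdiff : ∀ M, MemL2 (χ M - ζ) := fun M => (hχ M).sub hζ
  have hζ1 : Summable fun n : ℕ => n * ‖ζ n‖ ^ 2 :=
    summable_mul_sq_norm_of_tendsto_apply (fun n => n.cast_nonneg) hχ1 hC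
      (tendsto_apply_of_tendsto_sNormSq hdiff hlim)
  have hζ1' : Summable fun n : ℕ => (n + 1) * ‖ζ n‖ ^ 2 := by
    simpa only [add_mul, one_mul, add_comm] using Summable.add hζ hζ1
  have hpartial : Tendsto (fun M => ∑ n ∈ Finset.range M, conj (ζ n) * opA ζ n) atTop
      (nhds (alphaOf ζ)) := (summable_conj_mul_opA hζ hζ1).hasSum.tendsto_sum_nat
  set K := √C + √(∑' n : ℕ, (n + 1) * ‖ζ n‖ ^ 2)
  have hsmall : Tendsto (fun M : ℕ => alphaM M (χ M) - ∑ n ∈ Finset.range M, conj (ζ n) * opA ζ n)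
      atTop (nhds 0) := by
    refine squeeze_zero_norm (a := fun M : ℕ => K * √(sNormSq (χ M - ζ))) (fun M => ?_) ?_
    · refine (norm_alphaM_sub_sum_le M (hdiff M) (hχ1 M) hζ1').trans ?_
      gcongr
      exact add_le_add (Real.sqrt_le_sqrt (hC M)) le_rfl
    · simpa using (hlim.sqrt).const_mul K
  simpa using hsmall.add hpartial

lemma FM_natCast_apply_of_lt {M n : ℕ} (h : n < M) (J : ℝ) (z : Seq) :
    FM J M z n = -J * (alphaM M z * opAd z n + conj (alphaM M z) * opA z n
      - (‖alphaM M z‖ : ℂ) ^ 2 * z n) := by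
  rw [FM, opAdM_natCast_of_le h.le, opAM_natCast_of_lt h]

lemma tendsto_FM_natCast_apply {χ : ℕ → Seq} {ζ : Seq} {C : ℝ} (hχ : ∀ M, MemL2 (χ M))
    (hχ1 : ∀ M, Summable fun n : ℕ => n * ‖χ M n‖ ^ 2) (hC : ∀ M, ∑' n : ℕ, n * ‖χ M n‖ ^ 2 ≤ C)
    (hζ : MemL2 ζ) (hlim : Tendsto (fun M => sNormSq (χ M - ζ)) atTop (nhds 0)) (J : ℝ) (n : ℕ) :
    Tendsto (fun M : ℕ => FM J M (χ M) n) atTop (nhds (Ffull J ζ n)) := by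
  have hα := tendsto_alphaM_natCast hχ hχ1 hC hζ hlim
  have hc := tendsto_apply_of_tendsto_sNormSq (fun M => (hχ M).sub hζ) hlim
  have hF : Tendsto (fun M : ℕ => -J * (alphaM M (χ M) * opAd (χ M) n
      + conj (alphaM M (χ M)) * opA (χ M) n - (‖alphaM M (χ M)‖ : ℂ) ^ 2 * χ M n)) atTop
      (nhds (Ffull J ζ n)) :=
    (((hα.mul (tendsto_const_nhds.mul (hc _))).add (((continuous_conj.tendsto _).comp hα).mul
      (tendsto_const_nhds.mul (hc _)))).sub
        (((continuous_ofReal.tendsto _).comp hα.norm).pow 2 |>.mul (hc n))).const_mul _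
  refine hF.congr' ?_
  filter_upwards [eventually_gt_atTop n] with M hM
  rw [FM_natCast_apply_of_lt hM]

lemma norm_opAdM_le (M : ℝ) {z : Seq} {R : ℝ} (hz : ∀ k, ‖z k‖ ≤ R) (n : ℕ) :
    ‖opAdM M z n‖ ≤ √(n + 1) * R := by
  have hR : 0 ≤ R := (norm_nonneg _).trans (hz 0)
  unfold opAdM opAd
  split_ifs
  · rw [norm_mul, norm_real, Real.norm_of_nonneg (Real.sqrt_nonneg _)]
    gcongr
    · linarith
    · exact hz _
  · simp only [norm_zero]; positivity

lemma norm_opAM_le (M : ℝ) {z : Seq} {R : ℝ} (hz : ∀ k, ‖z k‖ ≤ R) (n : ℕ) :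
    ‖opAM M z n‖ ≤ √(n + 1) * R := by
  have hR : 0 ≤ R := (norm_nonneg _).trans (hz 0)
  unfold opAM
  split_ifs
  · rw [norm_mul, norm_real, Real.norm_of_nonneg (Real.sqrt_nonneg _)]
    gcongr
    exact hz _
  · simp only [norm_zero]; positivity

lemma norm_FM_apply_le (J M : ℝ) {z : Seq} {A R : ℝ} (hα : ‖alphaM M z‖ ≤ A)
    (hz : ∀ k, ‖z k‖ ≤ R) (n : ℕ) :
    ‖FM J M z n‖ ≤ |J| * ((2 * A * √(n + 1) + A ^ 2) * R) := by
  have hR : 0 ≤ R := (norm_nonneg _).trans (hz 0)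
  have h1 := norm_opAdM_le M hz n
  have h2 := norm_opAM_le M hz n
  rw [FM, norm_mul, norm_neg, norm_real, Real.norm_eq_abs]
  gcongr
  refine (norm_sub_le _ _).trans ?_
  refine (add_le_add (norm_add_le _ _) le_rfl).trans ?_
  simp only [norm_mul, norm_pow, RCLike.norm_conj, norm_real, norm_norm]
  have hzn := hz n
  have hA : 0 ≤ A := (norm_nonneg _).trans hα
  calc ‖alphaM M z‖ * ‖opAdM M z n‖ + ‖alphaM M z‖ * ‖opAM M z n‖ + ‖alphaM M z‖ ^ 2 * ‖z n‖
      ≤ A * (√(n + 1) * R) + A * (√(n + 1) * R) + A ^ 2 * R := by gcongr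
    _ = (2 * A * √(n + 1) + A ^ 2) * R := by ring

lemma continuous_FM_natCast_apply {ψ : ℝ → Seq} (hψ : ∀ k, Continuous fun s => ψ s k)
    (J : ℝ) (M n : ℕ) : Continuous fun s => FM J M (ψ s) n := by
  have hα : Continuous fun s => alphaM M (ψ s) := by
    simp only [alphaM_natCast_eq_sum, opA]
    exact continuous_finsetSum _ fun k _ =>
      (continuous_conj.comp (hψ k)).mul (continuous_const.mul (hψ (k + 1)))
  unfold FM opAdM opAM opAd
  split_ifs <;> fun_prop

lemma eq_duhamel_of_hasDerivAt {a : ℂ} {f g : ℝ → ℂ}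
    (hf : ∀ s, HasDerivAt f (-I * (a * f s + g s)) s) (hg : Continuous g) (t : ℝ) :
    f t = exp (-I * t * a) * f 0 - I * ∫ s in (0 : ℝ)..t, exp (-I * (t - s : ℝ) * a) * g s := by
  have hG : ∀ s : ℝ, HasDerivAt (fun u : ℝ => exp (I * u * a) * f u)
      (-I * (exp (I * s * a) * g s)) s := fun s => by
    have he : HasDerivAt (fun u : ℝ => exp (I * u * a)) (exp (I * s * a) * (I * a)) s := by
      simpa using (((hasDerivAt_id s).ofReal_comp.const_mul I).mul_const a).cexp
    exact (he.mul (hf s)).congr_deriv (by ring)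
  have hint := intervalIntegral.integral_eq_sub_of_hasDerivAt (fun s _ => hG s)
    ((by fun_prop : Continuous fun s : ℝ => -I * (exp (I * s * a) * g s)).intervalIntegrable 0 t)
  have hsplit : ∀ s : ℝ, exp (-I * (t - s : ℝ) * a) * g s
      = exp (-I * t * a) * (exp (I * s * a) * g s) := fun s => by
    rw [← mul_assoc, ← exp_add]
    push_cast
    ring_nf
  have hinv : exp (-I * t * a) * exp (I * t * a) = 1 := by
    rw [← exp_add, ← exp_zero]
    congr 1
    ring
  simp only [hsplit, intervalIntegral.integral_const_mul] at hint ⊢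
  simp only [ofReal_zero, mul_zero, zero_mul, exp_zero, one_mul] at hint
  linear_combination (-exp (-I * t * a)) * hint - f t * hinv

lemma norm_expA_apply (J μ U t : ℝ) (φ : Seq) (n : ℕ) : ‖expA J μ U t φ n‖ = ‖φ n‖ := by
  simp [expA, norm_exp, mul_re, Acoef_im]

lemma IsTruncSolution.duhamel {J μ U : ℝ} {M : ℕ} {ψ : ℝ → Seq}
    (hs : IsTruncSolution J μ U M ψ) (t : ℝ) (n : ℕ) :
    ψ t n = expA J μ U t (ψ 0) n - I * ∫ s in (0 : ℝ)..t, expA J μ U (t - s) (FM J M (ψ s)) n :=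
  eq_duhamel_of_hasDerivAt (fun s => hs.hasDerivAt_apply s n)
    (continuous_FM_natCast_apply hs.continuous_apply J M n) t

lemma tendsto_integral_expA_apply (J μ U t : ℝ) {G : ℕ → ℝ → Seq} {g : ℝ → Seq} {B : ℝ} {n : ℕ}
    (hcont : ∀ M, Continuous fun s => G M s n) (hbound : ∀ M s, ‖G M s n‖ ≤ B)
    (hlim : ∀ s, Tendsto (fun M => G M s n) atTop (nhds (g s n))) :
    Tendsto (fun M => ∫ s in (0 : ℝ)..t, expA J μ U (t - s) (G M s) n) atTop
      (nhds (∫ s in (0 : ℝ)..t, expA J μ U (t - s) (g s) n)) := by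
  refine intervalIntegral.tendsto_integral_filter_of_dominated_convergence (fun _ => B)
    (Eventually.of_forall fun M => ?_) (Eventually.of_forall fun M => ?_) intervalIntegrable_const
    (MeasureTheory.ae_of_all _ fun s _ => (hlim s).const_mul _)
  · exact (by unfold expA; fun_prop : Continuous _).aestronglyMeasurable
  · exact MeasureTheory.ae_of_all _ fun s _ => (norm_expA_apply ..).trans_le (hbound M s)

section APriori

variable {J μ U : ℝ} {M : ℕ} {ψ : ℝ → Seq}

lemma IsTruncSolution.norm_apply_le (hs : IsTruncSolution J μ U M ψ) (t : ℝ) (k : ℕ) :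
    ‖ψ t k‖ ≤ √(sNormSq (ψ 0)) :=
  hs.sNormSq_eq t ▸ norm_le_sqrt_sNormSq (hs.1 t).1 k

lemma IsTruncSolution.norm_alphaM_le (hs : IsTruncSolution J μ U M ψ) (t : ℝ) :
    ‖alphaM M (ψ t)‖ ≤ √(∑' n : ℕ, n * ‖ψ 0 n‖ ^ 2) * √(sNormSq (ψ 0)) := by
  rw [← hs.tsum_mul_sq_norm_eq t, ← hs.sNormSq_eq t]
  exact norm_alphaM_natCast_le M (hs.1 t).1 (hs.1 t).summable_natCast_mul

end APriori

theorem limit_satisfies_duhamel_general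
    (J μ U : ℝ) (φ0 : Seq)
    (φM : ℕ → ℝ → Seq)
    (hsol : ∀ M : ℕ, IsTruncSolution J μ U (M : ℝ) (φM M) ∧ φM M 0 = φ0)
    (φ : ℝ → Seq) (hφ2 : ∀ t, MemL2 (φ t))
    (hstrong : ∀ t : ℝ, Tendsto (fun M => sNormSq (fun n => φM M t n - φ t n)) atTop (nhds 0)) :
    ∀ t : ℝ, ∀ n : ℕ, φ t n = expA J μ U t φ0 n -
      Complex.I * ∫ s in (0:ℝ)..t, expA J μ U (t - s) (Ffull J (φ s)) n := by
  intro t n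
  have hs : ∀ M : ℕ, IsTruncSolution J μ U M (φM M) := fun M => (hsol M).1
  have h0 : ∀ M, φM M 0 = φ0 := fun M => (hsol M).2
  have hF : ∀ s, Tendsto (fun M : ℕ => FM J M (φM M s) n) atTop (nhds (Ffull J (φ s) n)) :=
    fun s => tendsto_FM_natCast_apply (fun M => ((hs M).1 s).1)
      (fun M => ((hs M).1 s).summable_natCast_mul)
      (fun M => ((hs M).tsum_mul_sq_norm_eq s).trans_le (by rw [h0])) (hφ2 s) (hstrong s) J n
  set R := √(sNormSq φ0)
  set A := √(∑' k : ℕ, k * ‖φ0 k‖ ^ 2) * R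
  have hbound : ∀ (M : ℕ) s, ‖FM J M (φM M s) n‖ ≤ |J| * ((2 * A * √(n + 1) + A ^ 2) * R) :=
    fun M s => norm_FM_apply_le J M (by simpa only [h0] using (hs M).norm_alphaM_le s)
      (fun k => by simpa only [h0] using (hs M).norm_apply_le s k) n
  have hint := tendsto_integral_expA_apply J μ U t
    (fun M => continuous_FM_natCast_apply (hs M).continuous_apply J M n) hbound hF
  have hduh : ∀ M, φM M t n = expA J μ U t φ0 n
      - I * ∫ s in (0 : ℝ)..t, expA J μ U (t - s) (FM J M (φM M s)) n :=
    fun M => h0 M ▸ (hs M).duhamel t n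
  exact tendsto_nhds_unique
    (tendsto_apply_of_tendsto_sNormSq (fun M => ((hs M).1 t).1.sub (hφ2 t)) (hstrong t) n)
    ((tendsto_const_nhds.sub (hint.const_mul I)).congr fun M => (hduh M).symm)

/-- The strong limit `φ` of the truncated solutions `φ_M` satisfies the
Duhamel form of the mean-field equation
`φ(t) = e^{-itA} φ₀ - i ∫₀ᵗ e^{-i(t-s)A} F(φ(s)) ds`. -/
theorem limit_satisfies_duhamel
    (J μ U : ℝ) (φ0 : Seq) (hdom : MemDomN 2 φ0) (hnorm : sNormSq φ0 = 1)
    (φM : ℕ → ℝ → Seq)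
    (hsol : ∀ M : ℕ, IsTruncSolution J μ U (M : ℝ) (φM M) ∧ φM M 0 = φ0)
    (φ : ℝ → Seq) (hφ2 : ∀ t, MemL2 (φ t))
    (hstrong : ∀ t : ℝ, Tendsto (fun M => sNormSq (fun n => φM M t n - φ t n)) atTop (nhds 0)) :
    ∀ t : ℝ, ∀ n : ℕ, φ t n = expA J μ U t φ0 n -
      Complex.I * ∫ s in (0:ℝ)..t, expA J μ U (t - s) (Ffull J (φ s)) n :=
  limit_satisfies_duhamel_general J μ U φ0 φM hsol φ hφ2 hstrong

end

end BoseHubbard
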